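/- Let (K,v) be a henselian valued field and a an element of the algebraic closure of K which is weakly immediate over K. If a is not strongly immediate over K, then there exists b in the algebraic closure of K such that (K(b)|K,v) is an immediate extension, dist(b,K) = dist(a,K), and [K(b):K] < [K(a):K]. -/

import Mathlib

noncomputable section
open scoped Classical

structure AddVal (Ω : Type*) [Field Ω] (Γ : Type*) [AddCommGroup Γ] [LinearOrder Γ] [IsOrderedAddMonoid Γ] where
  v : Ω → WithTop Γ
  v_top_iff : ∀ x, v x = ⊤ ↔ x = 0
  v_one : v 1 = 0
  v_mul : ∀ x y, v (x * y) = v x + v y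
  v_add : ∀ x y, min (v x) (v y) ≤ v (x + y)

namespace AddVal

variable {Ω : Type*} [Field Ω] {Γ : Type*} [AddCommGroup Γ] [LinearOrder Γ] [IsOrderedAddMonoid Γ]
variable (w : AddVal Ω Γ)

def valueGroup (K : Subfield Ω) : AddSubgroup Γ where
  carrier := {γ | ∃ x ∈ K, w.v x = (γ : WithTop Γ)}
  zero_mem' := ⟨1, K.one_mem, by rw [w.v_one]; rfl⟩
  add_mem' := by
    rintro γ δ ⟨x, hx, hxv⟩ ⟨y, hy, hyv⟩
    exact ⟨x * y, mul_mem hx hy, by rw [w.v_mul, hxv, hyv, ← WithTop.coe_add]⟩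
  neg_mem' := by
    rintro γ ⟨x, hx, hxv⟩
    have hx0 : x ≠ 0 := by
      intro h
      rw [h, (w.v_top_iff 0).mpr rfl] at hxv
      exact (WithTop.top_ne_coe) hxv
    refine ⟨x⁻¹, inv_mem hx, ?_⟩
    have h1 : w.v x + w.v x⁻¹ = 0 := by
      rw [← w.v_mul, mul_inv_cancel₀ hx0, w.v_one]
    rw [hxv] at h1
    cases h : w.v x⁻¹ with
    | top => rw [h] at h1; simp at h1
    | coe δ =>
        rw [h, ← WithTop.coe_add, ← WithTop.coe_zero, WithTop.coe_eq_coe] at h1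
        rw [WithTop.coe_eq_coe]
        exact eq_neg_of_add_eq_zero_right h1

def divHull (H : AddSubgroup Γ) : AddSubgroup Γ where
  carrier := {γ | ∃ n : ℕ, 0 < n ∧ n • γ ∈ H}
  zero_mem' := ⟨1, one_pos, by simpa using H.zero_mem⟩
  add_mem' := by
    rintro γ δ ⟨n, hn, hγ⟩ ⟨m, hm, hδ⟩
    refine ⟨n * m, Nat.mul_pos hn hm, ?_⟩
    rw [smul_add]
    refine H.add_mem ?_ ?_
    · rw [mul_comm, mul_smul]; exact AddSubgroup.nsmul_mem H hγ m
    · rw [mul_smul]; exact AddSubgroup.nsmul_mem H hδ n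
  neg_mem' := by
    rintro γ ⟨n, hn, hγ⟩
    exact ⟨n, hn, by rw [smul_neg]; exact H.neg_mem hγ⟩

def weaklyImmediate (K : Subfield Ω) (a : Ω) : Prop :=
  ∀ c ∈ K, ∃ c' ∈ K, w.v (a - c) < w.v (a - c')

def distSet (K : Subfield Ω) (a : Ω) : Set Γ :=
  {γ | γ ∈ divHull (w.valueGroup K) ∧
    ∃ c ∈ K, ∃ δ ∈ divHull (w.valueGroup K), w.v (a - c) = (δ : WithTop Γ) ∧ γ ≤ δ}

/-- The field degree `[L:K]` of an extension of subfields of `Ω` (0 if not an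
extension or infinite). -/
def fdeg (K L : Subfield Ω) : ℕ :=
  if h : K ≤ L then
    letI : Algebra K L := (Subfield.inclusion h).toAlgebra
    Module.finrank K L
  else 0

/-- The ramification index `(vL : vK)`. -/
def ramIdx (K L : Subfield Ω) : ℕ := (w.valueGroup K).relIndex (w.valueGroup L)

/-- The inertia degree `[Lv : Kv]`: the supremum of the cardinalities of families of
integral elements of `L` whose residues are `Kv`-linearly independent; the latter is
expressed by the standard valuation-theoretic criterion
`v (∑ cᵢ xᵢ) = min v cᵢ` for all families of coefficients in `K`. -/
def resDeg (K L : Subfield Ω) : ℕ :=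
  sSup {n : ℕ | ∃ x : Fin n → Ω, (∀ i, x i ∈ L ∧ 0 ≤ w.v (x i)) ∧
    ∀ c : Fin n → Ω, (∀ i, c i ∈ K) →
      w.v (∑ i, c i * x i) = Finset.univ.inf fun i => w.v (c i)}

/-- The defect `d(L|K,v) = [L:K] / ((vL:vK)·[Lv:Kv])`. -/
def defect (K L : Subfield Ω) : ℕ := fdeg K L / (w.ramIdx K L * w.resDeg K L)

/-- `(L|K,v)` is a uv-extension: every `K`-embedding of `L` into `Ω` preserves the
valuation (for `Ω` an algebraically closed valued extension with `L|K` algebraic,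
this says precisely that the extension of `v` from `K` to `L` is unique). -/
def uvExt (K L : Subfield Ω) : Prop :=
  ∃ h : K ≤ L, ∀ σ : ↥L →+* Ω, (∀ x : ↥K, σ (Subfield.inclusion h x) = (x : Ω)) →
    ∀ y : ↥L, w.v (σ y) = w.v (y : Ω)

/-- `(K,v)` is henselian: the extension of `v` to the algebraic closure is unique,
i.e. every `K`-endomorphism of `Ω` preserves the valuation. -/
def henselian (K : Subfield Ω) : Prop :=
  ∀ σ : Ω →+* Ω, (∀ x ∈ K, σ x = x) → ∀ y : Ω, w.v (σ y) = w.v y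

/-- The henselization of `(K,v)` inside `(Ω,v)`: the smallest henselian subfield
containing `K`. -/
def henselization (K : Subfield Ω) : Subfield Ω :=
  sInf {M : Subfield Ω | K ≤ M ∧ w.henselian M}

/-- `(L|K,v)` is an immediate extension: `vK → vL` and `Kv → Lv` are onto. -/
def immediateExt (K L : Subfield Ω) : Prop :=
  K ≤ L ∧ w.valueGroup K = w.valueGroup L ∧
    ∀ x ∈ L, w.v x = 0 → ∃ c ∈ K, 0 < w.v (x - c)

/-- The subfield `K(a)` of `Ω`. -/
def adjoinEl (K : Subfield Ω) (a : Ω) : Subfield Ω := Subfield.closure (insert a (K : Set Ω))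

/-- `m` elements of `L∖K`, weakly immediate over `K`, realize (modulo the subgroup `G`)
all distances of weakly immediate elements of `L∖K`. -/
def nddWorks (K L : Subfield Ω) (G : AddSubgroup Γ) (m : ℕ) : Prop :=
  ∃ a : Fin m → Ω, (∀ i, a i ∈ L ∧ a i ∉ K ∧ w.weaklyImmediate K (a i)) ∧
    ∀ b ∈ L, b ∉ K → w.weaklyImmediate K b →
      ∃ i, ∃ α ∈ G, w.distSet K b = (fun γ => α + γ) '' w.distSet K (a i)

/-- `ndd(L|K,v)`: the number of distances in `(L|K,v)` distinct modulo `vK`. -/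
def ndd (K L : Subfield Ω) : ℕ := sInf {m | w.nddWorks K L (w.valueGroup K) m}

/-- `ndd*(L|K,v)`: the number of distances in `(L|K,v)` distinct modulo the divisible
hull of `vK`. -/
def nddStar (K L : Subfield Ω) : ℕ := sInf {m | w.nddWorks K L (divHull (w.valueGroup K)) m}

/-- `a` is strongly immediate over `K`: `v(a-K)` has no maximal element and for every
polynomial `g` over `K` of degree `< [K(a):K]`, the value `v g(c)` is eventually fixed. -/
def stronglyImmediate (K : Subfield Ω) (a : Ω) : Prop :=
  w.weaklyImmediate K a ∧
    ∀ g : Polynomial Ω, (∀ n, g.coeff n ∈ K) → g.natDegree < fdeg K (adjoinEl K a) →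
      ∃ c₀ ∈ K, ∀ c ∈ K, ∀ c' ∈ K, w.v (a - c₀) ≤ w.v (a - c) → w.v (a - c₀) ≤ w.v (a - c') →
        w.v (g.eval c) = w.v (g.eval c')

/-- The characteristic exponent of the residue field `Kv`: the prime `q` with
`v q > 0` (i.e. `char Kv = q`) if it exists, and `1` otherwise. -/
def resCharExp : ℕ :=
  if h : ∃ q : ℕ, q.Prime ∧ 0 < w.v (q : Ω) then h.choose else 1

/-- `L|K` is a normal extension (for `Ω` algebraically closed and algebraic over `K`):
every `K`-endomorphism of `Ω` maps `L` into `L`. -/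
def normalExt (K L : Subfield Ω) : Prop :=
  K ≤ L ∧ ∀ σ : Ω →+* Ω, (∀ x ∈ K, σ x = x) → ∀ y ∈ L, σ y ∈ L

/-- The number `g` of distinct extensions of `v` from `K` to `L` (inside `(Ω,v)` with
`Ω` algebraically closed and algebraic over `K`, these are exactly the restrictions
to `L` of the conjugates of `v`). -/
def numExt (K L : Subfield Ω) : ℕ :=
  Nat.card {w' : ↥L → WithTop Γ //
    ∃ σ : Ω →+* Ω, (∀ x ∈ K, σ x = x) ∧ ∀ y : ↥L, w' y = w.v (σ y)}

/-- `H` is a convex subgroup of `G`. -/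
def convexIn (G H : AddSubgroup Γ) : Prop :=
  H ≤ G ∧ ∀ a ∈ H, ∀ b ∈ G, ∀ c ∈ H, a ≤ b → b ≤ c → b ∈ H

/-- `(K,v)` has rank `r`: there are exactly `r` proper convex subgroups of `vK`. -/
def hasRank (K : Subfield Ω) (r : ℕ) : Prop :=
  {H : AddSubgroup Γ | convexIn (w.valueGroup K) H ∧ H ≠ w.valueGroup K}.Finite ∧
    Nat.card {H : AddSubgroup Γ | convexIn (w.valueGroup K) H ∧ H ≠ w.valueGroup K} = r

end AddVal

/-- The subfield `K^{1/p} = {x | xᵖ ∈ K}` of `Ω` (for `Ω` of characteristic `p`). -/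
def pRoots (Ω : Type*) [Field Ω] (p : ℕ) [hp : Fact p.Prime] [CharP Ω p] (K : Subfield Ω) :
    Subfield Ω where
  carrier := {x | x ^ p ∈ K}
  one_mem' := by simpa using K.one_mem
  mul_mem' := by
    intro x y hx hy
    show (x * y) ^ p ∈ K
    rw [mul_pow]
    exact mul_mem hx hy
  zero_mem' := by
    show (0 : Ω) ^ p ∈ K
    rw [zero_pow hp.out.ne_zero]
    exact K.zero_mem
  add_mem' := by
    intro x y hx hy
    show (x + y) ^ p ∈ K
    rw [add_pow_char]
    exact add_mem hx hy
  neg_mem' := by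
    intro x hx
    show (-x) ^ p ∈ K
    rw [neg_pow, neg_one_pow_char Ω p, neg_one_mul]
    exact neg_mem hx
  inv_mem' := by
    intro x hx
    show x⁻¹ ^ p ∈ K
    rw [inv_pow]
    exact inv_mem hx

namespace AddVal

variable {Ω : Type*} [Field Ω] {Γ : Type*} [AddCommGroup Γ] [LinearOrder Γ] [IsOrderedAddMonoid Γ]
variable (w : AddVal Ω Γ)

/-- `(K(ϑ)|K,v)` is an Artin-Schreier defect extension: `ϑᵖ - ϑ ∈ K`, `ϑ ∉ K`, and the
extension has nontrivial defect; the latter is equivalent (for a normal extension of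
prime degree) to: `v` extends uniquely to `K(ϑ)` and the extension is immediate. -/
def ASDefectExt (p : ℕ) (K : Subfield Ω) (ϑ : Ω) : Prop :=
  ϑ ∉ K ∧ ϑ ^ p - ϑ ∈ K ∧ w.uvExt K (adjoinEl K ϑ) ∧ w.immediateExt K (adjoinEl K ϑ)

/-- The Artin-Schreier defect extension `(K(ϑ)|K,v)` is dependent. -/
def dependentAS (p : ℕ) (K : Subfield Ω) (ϑ : Ω) : Prop :=
  ∃ η : Ω, η ∉ K ∧ η ^ p ∈ K ∧ w.immediateExt K (adjoinEl K η) ∧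
    ∀ c ∈ K, w.v (ϑ - c) < w.v (ϑ - η)

/-- `(L|K,v)` is a tame extension (of a henselian field): every finite subextension
`E|K` is defectless, has ramification index prime to the residue characteristic
exponent `p`, and has separable residue field extension `Ev|Kv` (the latter expressed
by the criterion that each residue is a simple root of a polynomial over `Kv`). -/
def tameExt (p : ℕ) (K L : Subfield Ω) : Prop :=
  K ≤ L ∧ ∀ E : Subfield Ω, K ≤ E → E ≤ L → 0 < fdeg K E →
    w.defect K E = 1 ∧ ¬ p ∣ w.ramIdx K E ∧
      ∀ x ∈ E, 0 ≤ w.v x → ∃ g : Polynomial Ω, g.Monic ∧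
        (∀ n, g.coeff n ∈ K ∧ 0 ≤ w.v (g.coeff n)) ∧
        0 < w.v (g.eval x) ∧ w.v (g.derivative.eval x) = 0

end AddVal

/-!
Take `g` over `K` of degree `< [K(a):K]` whose value `v g(c)` does not stabilize as `c ∈ K`
approaches `a`. Writing `g(e) / g(c) = ∏ (e - d) / (c - d)` over the roots `d` of `g`, each factor
is a `1`-unit as soon as `c` is closer to `a` than `d` is and `e` is at least as close as `c`; so if
every root were beaten by some element of `K`, `v g(c)` would stabilize. Hence some root is at least
as close to `a` as all of `K`; let `b` be such an element of least degree over `K`. Then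
`v(b - c) = v(a - c)` for `c ∈ K`, so `a` and `b` have the same distance, and an element `r(b)` of
`K(b)` with `deg r < [K(b):K]` has no root that close to `a`: the same product argument gives
`c ∈ K` with `v(r(b) - r(c)) > v(r(c))`, which makes `K(b)|K` immediate.
-/

open Polynomial

namespace AddValuation

variable {Ω : Type*} [Field Ω] {Γ : Type*} [AddCommGroup Γ] [LinearOrder Γ] [IsOrderedAddMonoid Γ]
  (v : AddValuation Ω (WithTop Γ))

theorem map_mul_lt_map_mul_sub_mul {x y X Y : Ω} (h : v y < v (x - y)) (H : v Y < v (X - Y)) :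
    v (y * Y) < v (x * X - y * Y) := by
  have hXY : v X = v Y := v.map_eq_of_lt_sub H
  rw [show x * X - y * Y = (x - y) * X + y * (X - Y) by ring]
  refine v.map_lt_add ?_ ?_
  · rw [v.map_mul, v.map_mul, hXY]
    exact WithTop.add_lt_add_right H.ne_top h
  · rw [v.map_mul, v.map_mul]
    exact WithTop.add_lt_add_left h.ne_top H

theorem map_multiset_prod_lt_map_sub_prod {ι : Type*} (s : Multiset ι) (x y : ι → Ω)
    (h : ∀ i ∈ s, v (y i) < v (x i - y i)) :
    v (s.map y).prod < v ((s.map x).prod - (s.map y).prod) := by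
  induction s using Multiset.induction_on with
  | empty => simp [v.map_one, v.map_zero]
  | cons i s ih =>
    rw [Multiset.forall_mem_cons] at h
    simp only [Multiset.map_cons, Multiset.prod_cons]
    exact v.map_mul_lt_map_mul_sub_mul h.1 (ih h.2)

theorem map_eval_lt_map_eval_sub_eval {p : Polynomial Ω} (hp : p.Splits) (hp0 : p ≠ 0) {a c e : Ω}
    (hroots : ∀ d ∈ p.roots, v (a - d) < v (a - c)) (hce : v (a - c) ≤ v (a - e)) :
    v (p.eval c) < v (p.eval e - p.eval c) := by
  have heval : ∀ z, p.eval z = p.leadingCoeff * (p.roots.map fun d => z - d).prod := by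
    intro z
    conv_lhs => rw [hp.eq_prod_roots]
    simp [eval_multiset_prod, Multiset.map_map]
  rw [heval c, heval e, ← mul_sub, v.map_mul, v.map_mul]
  refine WithTop.add_lt_add_left (v.ne_top_iff.2 (leadingCoeff_ne_zero.2 hp0)) ?_
  refine v.map_multiset_prod_lt_map_sub_prod _ _ _ fun d hd => ?_
  calc v (c - d) = v ((a - d) - (a - c)) := by ring_nf
    _ = v (a - d) := v.map_sub_eq_of_lt_left (hroots d hd)
    _ < v (a - c) := hroots d hd
    _ ≤ v ((a - c) - (a - e)) := v.map_le_sub le_rfl hce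
    _ = v (e - d - (c - d)) := by ring_nf

end AddValuation

namespace AddVal

variable {Ω : Type*} [Field Ω]

theorem le_adjoinEl (K : Subfield Ω) (b : Ω) : K ≤ adjoinEl K b :=
  fun _ hx => Subfield.subset_closure (Set.mem_insert_of_mem _ hx)

theorem adjoinEl_eq_adjoin_toSubfield (K : Subfield Ω) (b : Ω) :
    adjoinEl K b = (IntermediateField.adjoin K {b}).toSubfield := by
  rw [IntermediateField.adjoin_toSubfield, adjoinEl, Set.union_singleton]
  congr
  exact Subtype.range_coe.symm

theorem fdeg_adjoinEl {K : Subfield Ω} {b : Ω} (hb : IsIntegral K b) :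
    fdeg K (adjoinEl K b) = (minpoly K b).natDegree := by
  have hK : K ≤ (IntermediateField.adjoin K {b}).toSubfield :=
    fun x hx => (IntermediateField.adjoin K {b}).algebraMap_mem ⟨x, hx⟩
  rw [adjoinEl_eq_adjoin_toSubfield, fdeg, dif_pos hK, ← IntermediateField.adjoin.finrank hb]
  rfl

theorem exists_aeval_eq_of_mem_adjoinEl {K : Subfield Ω} {b x : Ω} (hb : IsIntegral K b)
    (hx : x ∈ adjoinEl K b) :
    ∃ r : Polynomial K, r.natDegree < (minpoly K b).natDegree ∧ aeval b r = x := by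
  rw [adjoinEl_eq_adjoin_toSubfield] at hx
  obtain ⟨r, hr, hxr⟩ := (IntermediateField.adjoin.powerBasis hb).exists_eq_aeval ⟨x, hx⟩
  refine ⟨r, IntermediateField.adjoin.powerBasis_dim hb ▸ hr, ?_⟩
  simpa [aeval_algHom_apply] using (congrArg Subtype.val hxr).symm

variable {Γ : Type*} [AddCommGroup Γ] [LinearOrder Γ] [IsOrderedAddMonoid Γ] (w : AddVal Ω Γ)

def toAddValuation : AddValuation Ω (WithTop Γ) :=
  AddValuation.of w.v ((w.v_top_iff 0).2 rfl) w.v_one w.v_add w.v_mul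

theorem immediateExt_of_forall_exists_v_lt_v_sub {K L : Subfield Ω} (hKL : K ≤ L)
    (h : ∀ x ∈ L, x ≠ 0 → ∃ c ∈ K, w.v c < w.v (x - c)) : w.immediateExt K L := by
  have hne : ∀ {x}, w.v x ≠ ⊤ → x ≠ 0 := fun hx h0 => hx ((w.v_top_iff _).2 h0)
  have hval : ∀ x ∈ L, w.v x ≠ ⊤ → ∃ c ∈ K, w.v x = w.v c ∧ w.v c < w.v (x - c) := by
    intro x hx hxt
    obtain ⟨c, hc, hlt⟩ := h x hx (hne hxt)
    exact ⟨c, hc, w.toAddValuation.map_eq_of_lt_sub hlt, hlt⟩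
  refine ⟨hKL, le_antisymm (fun γ ⟨x, hx, hxγ⟩ => ⟨x, hKL hx, hxγ⟩) ?_, ?_⟩
  · rintro γ ⟨x, hx, hxγ⟩
    obtain ⟨c, hc, hxc, -⟩ := hval x hx (hxγ ▸ WithTop.coe_ne_top)
    exact ⟨c, hc, hxc ▸ hxγ⟩
  · intro x hx hx0
    obtain ⟨c, hc, hxc, hlt⟩ := hval x hx (hx0 ▸ WithTop.coe_ne_top)
    exact ⟨c, hc, hx0 ▸ hxc ▸ hlt⟩

variable {w} {K : Subfield Ω} {a : Ω}

theorem exists_forall_v_sub_lt (s : Multiset Ω)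
    (h : ∀ d ∈ s, ∃ c ∈ K, w.v (a - d) < w.v (a - c)) :
    ∃ c₀ ∈ K, ∀ d ∈ s, w.v (a - d) < w.v (a - c₀) := by
  induction s using Multiset.induction_on with
  | empty => exact ⟨0, K.zero_mem, by simp⟩
  | cons d s ih =>
    simp only [Multiset.forall_mem_cons] at h ⊢
    obtain ⟨c₁, hc₁, h₁⟩ := ih h.2
    obtain ⟨c₂, hc₂, h₂⟩ := h.1
    rcases le_total (w.v (a - c₁)) (w.v (a - c₂)) with hle | hle
    · exact ⟨c₂, hc₂, h₂, fun d' hd' => (h₁ d' hd').trans_le hle⟩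
    · exact ⟨c₁, hc₁, h₂.trans_le hle, h₁⟩

theorem exists_v_eval_lt_v_eval_sub {p : Polynomial Ω} (hp : p.Splits) (hp0 : p ≠ 0)
    (hroots : ∀ d ∈ p.roots, ∃ c ∈ K, w.v (a - d) < w.v (a - c)) :
    ∃ c₀ ∈ K, ∀ e, w.v (a - c₀) ≤ w.v (a - e) → w.v (p.eval c₀) < w.v (p.eval e - p.eval c₀) := by
  obtain ⟨c₀, hc₀, h⟩ := exists_forall_v_sub_lt p.roots hroots
  exact ⟨c₀, hc₀, fun e he => w.toAddValuation.map_eval_lt_map_eval_sub_eval hp hp0 h he⟩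

theorem exists_natDegree_minpoly_lt_of_not_stronglyImmediate [IsAlgClosed Ω]
    (hwi : w.weaklyImmediate K a) (hnsi : ¬ w.stronglyImmediate K a) :
    ∃ d, (∀ c ∈ K, w.v (a - c) ≤ w.v (a - d)) ∧
      (minpoly K d).natDegree < fdeg K (adjoinEl K a) := by
  obtain ⟨g, hgK, hgdeg, hg⟩ : ∃ g : Polynomial Ω, (∀ n, g.coeff n ∈ K) ∧
      g.natDegree < fdeg K (adjoinEl K a) ∧ ∀ c₀ ∈ K, ∃ c ∈ K, ∃ c' ∈ K,
        w.v (a - c₀) ≤ w.v (a - c) ∧ w.v (a - c₀) ≤ w.v (a - c') ∧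
          w.v (g.eval c) ≠ w.v (g.eval c') := by
    simpa [stronglyImmediate, hwi] using hnsi
  obtain ⟨G, rfl⟩ : ∃ G : Polynomial K, G.map (algebraMap K Ω) = g :=
    (mem_lifts g).1 ((lifts_iff_coeff_lifts g).2 fun n => ⟨⟨_, hgK n⟩, rfl⟩)
  have hG : G ≠ 0 := by
    rintro rfl
    obtain ⟨c, -, c', -, -, -, h⟩ := hg 0 K.zero_mem
    simp at h
  obtain ⟨d, hd, hdK⟩ : ∃ d ∈ G.aroots Ω, ∀ c ∈ K, w.v (a - c) ≤ w.v (a - d) := by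
    by_contra! hroots
    obtain ⟨c₀, hc₀, hlt⟩ :=
      exists_v_eval_lt_v_eval_sub (IsAlgClosed.splits _) (map_ne_zero hG) hroots
    obtain ⟨c, -, c', -, hc, hc', hne⟩ := hg c₀ hc₀
    exact hne ((w.toAddValuation.map_eq_of_lt_sub (hlt c hc)).trans
      (w.toAddValuation.map_eq_of_lt_sub (hlt c' hc')).symm)
  refine ⟨d, hdK, lt_of_le_of_lt ?_ hgdeg⟩
  rw [natDegree_map]
  exact natDegree_le_natDegree (minpoly.degree_le_of_ne_zero K d hG (mem_aroots.1 hd).2)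

theorem immediateExt_adjoinEl_of_minimal [IsAlgClosed Ω] {b : Ω} (hb : IsIntegral K b)
    (hbK : ∀ c ∈ K, w.v (a - c) ≤ w.v (a - b))
    (hmin : ∀ d, (∀ c ∈ K, w.v (a - c) ≤ w.v (a - d)) →
      (minpoly K b).natDegree ≤ (minpoly K d).natDegree) :
    w.immediateExt K (adjoinEl K b) := by
  refine w.immediateExt_of_forall_exists_v_lt_v_sub (le_adjoinEl K b) fun x hx hx0 => ?_
  obtain ⟨r, hrdeg, rfl⟩ := exists_aeval_eq_of_mem_adjoinEl hb hx
  have hr : r ≠ 0 := by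
    rintro rfl
    simp at hx0
  have hroots : ∀ d ∈ r.aroots Ω, ∃ c ∈ K, w.v (a - d) < w.v (a - c) := by
    intro d hd
    by_contra! hdK
    have := natDegree_le_natDegree (minpoly.degree_le_of_ne_zero K d hr (mem_aroots.1 hd).2)
    have := hmin d hdK
    omega
  obtain ⟨c₀, hc₀, hlt⟩ :=
    exists_v_eval_lt_v_eval_sub (IsAlgClosed.splits _) (map_ne_zero hr) hroots
  refine ⟨aeval c₀ r, ?_, by simpa [eval_map_algebraMap] using hlt b (hbK c₀ hc₀)⟩
  rw [show c₀ = algebraMap K Ω ⟨c₀, hc₀⟩ from rfl, aeval_algebraMap_apply_eq_algebraMap_eval]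
  exact SetLike.coe_mem _

theorem distSet_eq_of_forall_le (hwi : w.weaklyImmediate K a) {b : Ω}
    (hbK : ∀ c ∈ K, w.v (a - c) ≤ w.v (a - b)) : w.distSet K b = w.distSet K a := by
  have hbc : ∀ c ∈ K, w.v (b - c) = w.v (a - c) := by
    intro c hc
    obtain ⟨c', hc', hlt⟩ := hwi c hc
    calc w.v (b - c) = w.v ((a - c) - (a - b)) := by ring_nf
      _ = w.v (a - c) := w.toAddValuation.map_sub_eq_of_lt_left (hlt.trans_le (hbK c' hc'))
  ext γ
  simp only [distSet, Set.mem_ofPred_eq]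
  exact and_congr_right fun _ => exists_congr fun c => and_congr_right fun hc => by rw [hbc c hc]

end AddVal

theorem statement_5_general (Ω : Type*) [Field Ω] [IsAlgClosed Ω]
    (Γ : Type*) [AddCommGroup Γ] [LinearOrder Γ] [IsOrderedAddMonoid Γ] (w : AddVal Ω Γ)
    (K : Subfield Ω) [Algebra.IsAlgebraic ↥K Ω]
    (a : Ω) (hwi : w.weaklyImmediate K a) (hnsi : ¬ w.stronglyImmediate K a) :
    ∃ b : Ω, w.immediateExt K (AddVal.adjoinEl K b) ∧
      w.distSet K b = w.distSet K a ∧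
      AddVal.fdeg K (AddVal.adjoinEl K b) < AddVal.fdeg K (AddVal.adjoinEl K a) := by
  obtain ⟨d, hdK, hd⟩ := AddVal.exists_natDegree_minpoly_lt_of_not_stronglyImmediate hwi hnsi
  obtain ⟨b, hbK, hbmin⟩ := (measure fun d => (minpoly K d).natDegree).wf.has_min
    {d | ∀ c ∈ K, w.v (a - c) ≤ w.v (a - d)} ⟨d, hdK⟩
  have hmin : ∀ d', (∀ c ∈ K, w.v (a - c) ≤ w.v (a - d')) →
      (minpoly K b).natDegree ≤ (minpoly K d').natDegree := fun d' hd' => not_lt.1 (hbmin d' hd')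
  have hb : IsIntegral K b := Algebra.IsIntegral.isIntegral b
  refine ⟨b, AddVal.immediateExt_adjoinEl_of_minimal hb hbK hmin,
    AddVal.distSet_eq_of_forall_le hwi hbK, ?_⟩
  rw [AddVal.fdeg_adjoinEl hb]
  exact (hmin d hdK).trans_lt hd

/-- Lemma `wisi`. Over a henselian field `(K,v)`, if `a` in the
algebraic closure of `K` is weakly immediate but not strongly immediate over `K`, then
there is `b` with `(K(b)|K,v)` immediate, `dist(b,K) = dist(a,K)` and
`[K(b):K] < [K(a):K]`. -/
theorem statement_5 (Ω : Type*) [Field Ω] [IsAlgClosed Ω]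
    (Γ : Type*) [AddCommGroup Γ] [LinearOrder Γ] [IsOrderedAddMonoid Γ] (w : AddVal Ω Γ)
    (K : Subfield Ω) [Algebra.IsAlgebraic ↥K Ω]
    (hsur : ∀ γ : Γ, ∃ x : Ω, w.v x = (γ : WithTop Γ))
    (hhens : w.henselian K)
    (a : Ω) (hwi : w.weaklyImmediate K a) (hnsi : ¬ w.stronglyImmediate K a) :
    ∃ b : Ω, w.immediateExt K (AddVal.adjoinEl K b) ∧
      w.distSet K b = w.distSet K a ∧
      AddVal.fdeg K (AddVal.adjoinEl K b) < AddVal.fdeg K (AddVal.adjoinEl K a) :=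
  statement_5_general Ω Γ w K a hwi hnsi
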